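/- arXiv:2302.07793 — 2 statements merged into one kernel-verified Lean document; each statement's English description precedes it below -/
import Mathlib

section
/- Under the setting of the previous bound: let $g : [0,T] \times \mathbf{R}^n \times \mathbf{R}^{n\times d} \to \mathbf{R}^n$ be measurable, Lipschitz in $y$ with constant $\mu$, and such that for each fixed $(y,z)$, $s \mapsto g(s,y,z)$ is integrable. Fix $(y,z)$ and let, for each $\varepsilon \in (0, T-t]$, $\varphi^{t+\varepsilon}$ solve the backward ODE $\varphi^{t+\varepsilon}(s) = y + \int_s^{t+\varepsilon} g(r, \varphi^{t+\varepsilon}(r), z)\, dr$ on $[t, t+\varepsilon]$. Then for almost every $t \in [0,T)$ (every Lebesgue point of $r \mapsto g(r,y,z)$), $\lim_{\varepsilon \to 0^+} \frac{1}{\varepsilon}\left(\varphi^{t+\varepsilon}(t) - y\right) = g(t, y, z)$. -/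
open MeasureTheory intervalIntegral Filter Metric

set_option maxHeartbeats 2000000

/-- invariant representation: for a.e. `t ∈ [0,T)`,
`(φ^{t+ε}(t) - y)/ε → g(t,y,z)` as `ε → 0⁺`, where `φ^{t+ε}` solves the
backward ODE `φ(s) = y + ∫_s^{t+ε} g(r, φ(r), z) dr` on `[t, t+ε]`. -/
theorem stmt2 (n d : ℕ) (T μ : ℝ) (hT : 0 < T) (hμ : 0 < μ)
    (y : EuclideanSpace ℝ (Fin n)) (z : EuclideanSpace ℝ (Fin n × Fin d))
    (g : ℝ → EuclideanSpace ℝ (Fin n) → EuclideanSpace ℝ (Fin n × Fin d) →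
      EuclideanSpace ℝ (Fin n))
    (hg_meas : Measurable fun p : ℝ × EuclideanSpace ℝ (Fin n) × EuclideanSpace ℝ (Fin n × Fin d)
      => g p.1 p.2.1 p.2.2)
    (hg_lip : ∀ s ∈ Set.Icc 0 T, ∀ (y₁ y₂ : EuclideanSpace ℝ (Fin n))
      (z' : EuclideanSpace ℝ (Fin n × Fin d)), ‖g s y₁ z' - g s y₂ z'‖ ≤ μ * ‖y₁ - y₂‖)
    (hg_int : ∀ (y' : EuclideanSpace ℝ (Fin n)) (z' : EuclideanSpace ℝ (Fin n × Fin d)),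
      IntegrableOn (fun s => g s y' z') (Set.Icc 0 T))
    (φ : ℝ → ℝ → ℝ → EuclideanSpace ℝ (Fin n))
    (hφ_cont : ∀ t ∈ Set.Ico 0 T, ∀ ε ∈ Set.Ioc 0 (T - t),
      ContinuousOn (φ t ε) (Set.Icc t (t + ε)))
    (hφ : ∀ t ∈ Set.Ico 0 T, ∀ ε ∈ Set.Ioc 0 (T - t), ∀ s ∈ Set.Icc t (t + ε),
      φ t ε s = y + ∫ r in s..(t + ε), g r (φ t ε r) z) :
    ∀ᵐ t ∂(volume.restrict (Set.Ico 0 T)),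
      Tendsto (fun ε : ℝ => ε⁻¹ • (φ t ε t - y)) (nhdsWithin 0 (Set.Ioi 0))
        (nhds (g t y z)) := by
  have tri : ∀ a b : EuclideanSpace ℝ (Fin n), ‖a‖ ≤ ‖a - b‖ + ‖b‖ := fun a b => by
    simpa using norm_add_le (a - b) b
  set f : ℝ → EuclideanSpace ℝ (Fin n) := fun s => g s y z with hfdef
  set F : ℝ → EuclideanSpace ℝ (Fin n) := (Set.Icc 0 T).indicator f with hFdef
  have hFint : Integrable F := by
    rw [hFdef, integrable_indicator_iff measurableSet_Icc]
    exact hg_int y z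
  have hA : ∀ᵐ t ∂(volume : Measure ℝ),
      Tendsto (fun ε : ℝ => ⨍ u in closedBall t ε, ‖F u - F t‖)
        (nhdsWithin 0 (Set.Ioi 0)) (nhds 0) := by
    filter_upwards [IsUnifLocDoublingMeasure.ae_tendsto_average_norm_sub volume
      hFint.locallyIntegrable 1] with t ht
    exact ht (fun _ => t) id tendsto_id
      (by filter_upwards [self_mem_nhdsWithin] with ε (hε : 0 < ε) using by simpa using hε.le)
  rw [ae_restrict_iff' measurableSet_Ico]
  filter_upwards [hA] with t hAt htmem
  obtain ⟨ht0, htT⟩ := htmem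
  -- Step B : one-sided Lebesgue point
  set B : ℝ → ℝ := fun ε => ε⁻¹ * ∫ u in Set.Ioc t (t + ε), ‖f u - f t‖ with hBdef
  have hFt : F t = f t := by
    rw [hFdef, Set.indicator_of_mem]; exact ⟨ht0, htT.le⟩
  have hB : Tendsto B (nhdsWithin 0 (Set.Ioi 0)) (nhds 0) := by
    have h2 : Tendsto (fun ε : ℝ => 2 * ⨍ u in closedBall t ε, ‖F u - F t‖)
        (nhdsWithin 0 (Set.Ioi 0)) (nhds 0) := by
      simpa using hAt.const_mul 2
    refine squeeze_zero' ?_ ?_ h2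
    · filter_upwards [self_mem_nhdsWithin] with ε (hε : 0 < ε)
      exact mul_nonneg (by positivity) (integral_nonneg fun u => norm_nonneg _)
    · have hmem : Set.Ioc (0:ℝ) (T - t) ∈ nhdsWithin (0:ℝ) (Set.Ioi 0) :=
        Ioc_mem_nhdsGT_of_mem ⟨le_refl _, by linarith⟩
      filter_upwards [hmem] with ε hε
      obtain ⟨hε0, hεT⟩ := hε
      have hsub : Set.Ioc t (t + ε) ⊆ Set.Icc 0 T := fun u hu =>
        ⟨by linarith [hu.1], by linarith [hu.2]⟩
      have hFn_int : IntegrableOn (fun u => ‖F u - F t‖) (closedBall t ε) := by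
        exact (hFint.integrableOn.sub
          (integrableOn_const measure_closedBall_lt_top.ne)).norm
      have h1 : (∫ u in Set.Ioc t (t + ε), ‖f u - f t‖)
          ≤ ∫ u in closedBall t ε, ‖F u - F t‖ := by
        have heq : ∫ u in Set.Ioc t (t + ε), ‖f u - f t‖
            = ∫ u in Set.Ioc t (t + ε), ‖F u - F t‖ := by
          refine setIntegral_congr_fun measurableSet_Ioc fun u hu => ?_
          rw [hFt, hFdef, Set.indicator_of_mem (hsub hu)]
        rw [heq]
        refine setIntegral_mono_set hFn_int
          (ae_of_all _ fun u => norm_nonneg _) (ae_of_all _ ?_)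
        intro u hu
        rw [Real.closedBall_eq_Icc]
        exact ⟨by linarith [hu.1], hu.2⟩
      have havg : (2:ℝ) * ⨍ u in closedBall t ε, ‖F u - F t‖
          = ε⁻¹ * ∫ u in closedBall t ε, ‖F u - F t‖ := by
        rw [setAverage_eq, measureReal_def, Real.volume_closedBall, ENNReal.toReal_ofReal (by linarith),
          smul_eq_mul]
        field_simp
      rw [hBdef]
      calc ε⁻¹ * ∫ u in Set.Ioc t (t + ε), ‖f u - f t‖
          ≤ ε⁻¹ * ∫ u in closedBall t ε, ‖F u - F t‖ :=
            mul_le_mul_of_nonneg_left h1 (by positivity)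
        _ = 2 * ⨍ u in closedBall t ε, ‖F u - F t‖ := havg.symm
  -- Step C : main estimate
  rw [tendsto_iff_norm_sub_tendsto_zero]
  have hbound : Tendsto (fun ε : ℝ => B ε + 2 * μ * ε * (B ε + ‖f t‖))
      (nhdsWithin 0 (Set.Ioi 0)) (nhds 0) := by
    have hε0 : Tendsto (fun ε : ℝ => ε) (nhdsWithin 0 (Set.Ioi 0)) (nhds 0) :=
      tendsto_id.mono_left nhdsWithin_le_nhds
    have := hB.add (((hε0.const_mul (2 * μ)).mul (hB.add
      (tendsto_const_nhds (x := ‖f t‖) (α := ℝ) (f := nhdsWithin 0 (Set.Ioi 0))))))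
    simpa [mul_assoc] using this
  refine squeeze_zero' (.of_forall fun ε => norm_nonneg _) ?_ hbound
  have hmem : Set.Ioc (0:ℝ) (min (T - t) ((2 * μ)⁻¹)) ∈ nhdsWithin (0:ℝ) (Set.Ioi 0) :=
    Ioc_mem_nhdsGT_of_mem ⟨le_refl _, lt_min (by linarith) (by positivity)⟩
  filter_upwards [hmem] with ε hε
  obtain ⟨hε0, hεmin⟩ := hε
  have hεT : ε ≤ T - t := hεmin.trans (min_le_left _ _)
  have hεμ : μ * ε ≤ 1 / 2 := by
    have h := hεmin.trans (min_le_right _ _)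
    rw [le_div_iff₀ (by norm_num)]
    calc μ * ε * 2 ≤ μ * (2 * μ)⁻¹ * 2 := by nlinarith
      _ = 1 := by field_simp
  have htε : t ≤ t + ε := by linarith
  have hvol : (volume (Set.Ioc t (t + ε))).toReal = ε := by
    rw [Real.volume_Ioc, ENNReal.toReal_ofReal (by linarith)]; ring
  have hsubIcc : Set.Icc t (t + ε) ⊆ Set.Icc 0 T := fun u hu =>
    ⟨by linarith [hu.1], by linarith [hu.2]⟩
  have hf_int : IntegrableOn f (Set.Icc t (t + ε)) := (hg_int y z).mono_set hsubIcc
  have hφc : ContinuousOn (φ t ε) (Set.Icc t (t + ε)) :=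
    hφ_cont t ⟨ht0, htT⟩ ε ⟨hε0, hεT⟩
  obtain ⟨C, hC⟩ := (isCompact_Icc).exists_bound_of_continuousOn hφc
  have hφmeas : AEStronglyMeasurable (φ t ε) (volume.restrict (Set.Icc t (t + ε))) :=
    hφc.aestronglyMeasurable measurableSet_Icc
  have hgφmeas : AEStronglyMeasurable (fun r => g r (φ t ε r) z)
      (volume.restrict (Set.Icc t (t + ε))) := by
    have : AEMeasurable (fun r => (r, φ t ε r, z))
        (volume.restrict (Set.Icc t (t + ε))) :=
      aemeasurable_id.prodMk (hφmeas.aemeasurable.prodMk aemeasurable_const)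
    exact (hg_meas.comp_aemeasurable this).aestronglyMeasurable
  have hlip_pt : ∀ r ∈ Set.Icc t (t + ε), ‖g r (φ t ε r) z - f r‖ ≤ μ * ‖φ t ε r - y‖ :=
    fun r hr => hg_lip r (hsubIcc hr) (φ t ε r) y z
  have hgφ_int : IntegrableOn (fun r => g r (φ t ε r) z) (Set.Icc t (t + ε)) := by
    have hdom : IntegrableOn (fun r => ‖f r‖ + μ * (C + ‖y‖)) (Set.Icc t (t + ε)) :=
      hf_int.norm.add (integrableOn_const measure_Icc_lt_top.ne)
    refine Integrable.mono' hdom hgφmeas ?_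
    filter_upwards [ae_restrict_mem measurableSet_Icc] with r hr
    calc ‖g r (φ t ε r) z‖ ≤ ‖g r (φ t ε r) z - f r‖ + ‖f r‖ := tri _ _
      _ ≤ μ * ‖φ t ε r - y‖ + ‖f r‖ := by gcongr; exact hlip_pt r hr
      _ ≤ μ * (C + ‖y‖) + ‖f r‖ := by
          gcongr
          calc ‖φ t ε r - y‖ ≤ ‖φ t ε r‖ + ‖y‖ := norm_sub_le _ _
            _ ≤ C + ‖y‖ := by gcongr; exact hC r hr
      _ = ‖f r‖ + μ * (C + ‖y‖) := by ring
  have hφy_int : IntegrableOn (fun r => ‖φ t ε r - y‖) (Set.Icc t (t + ε)) :=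
    ((hφc.sub continuousOn_const).norm).integrableOn_compact isCompact_Icc
  -- integrability on Ioc, with explicitly given statements
  have hint_f : IntegrableOn f (Set.Ioc t (t + ε)) := hf_int.mono_set Set.Ioc_subset_Icc_self
  have hint_gφ : IntegrableOn (fun r => g r (φ t ε r) z) (Set.Ioc t (t + ε)) :=
    hgφ_int.mono_set Set.Ioc_subset_Icc_self
  have hint_φy : IntegrableOn (fun r => ‖φ t ε r - y‖) (Set.Ioc t (t + ε)) :=
    hφy_int.mono_set Set.Ioc_subset_Icc_self
  have hint_c : ∀ c : EuclideanSpace ℝ (Fin n), IntegrableOn (fun _ => c) (Set.Ioc t (t + ε)) :=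
    fun c => integrableOn_const measure_Ioc_lt_top.ne
  have hint_fc : IntegrableOn (fun u => f u - f t) (Set.Ioc t (t + ε)) := by
    exact hint_f.sub (hint_c (f t))
  have hint_fcn : IntegrableOn (fun u => ‖f u - f t‖) (Set.Ioc t (t + ε)) := by
    exact hint_fc.norm
  have hint_gf : IntegrableOn (fun u => g u (φ t ε u) z - f u) (Set.Ioc t (t + ε)) := by
    exact hint_gφ.sub hint_f
  have hint_μφ : IntegrableOn (fun u => μ * ‖φ t ε u - y‖) (Set.Ioc t (t + ε)) := by
    exact hint_φy.const_mul μ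
  have hint_fn : IntegrableOn (fun u => ‖f u‖) (Set.Ioc t (t + ε)) := hint_f.norm
  set A : ℝ := ∫ u in Set.Ioc t (t + ε), ‖f u‖ with hAdef
  set I : ℝ := ∫ u in Set.Ioc t (t + ε), ‖φ t ε u - y‖ with hIdef
  have hI_nonneg : 0 ≤ I := integral_nonneg fun u => norm_nonneg _
  have hA_nonneg : 0 ≤ A := integral_nonneg fun u => norm_nonneg _
  have hμI : ∫ u in Set.Ioc t (t + ε), μ * ‖φ t ε u - y‖ = μ * I := by
    rw [hIdef, MeasureTheory.integral_const_mul]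
  -- pointwise bound
  have hpt : ∀ r ∈ Set.Icc t (t + ε), ‖φ t ε r - y‖ ≤ A + μ * I := by
    intro r hr
    have heq : φ t ε r - y = ∫ u in Set.Ioc r (t + ε), g u (φ t ε u) z := by
      have h := hφ t ⟨ht0, htT⟩ ε ⟨hε0, hεT⟩ r hr
      rw [h, intervalIntegral.integral_of_le hr.2]
      abel
    rw [heq]
    calc ‖∫ u in Set.Ioc r (t + ε), g u (φ t ε u) z‖
        ≤ ∫ u in Set.Ioc r (t + ε), ‖g u (φ t ε u) z‖ := norm_integral_le_integral_norm _
      _ ≤ ∫ u in Set.Ioc t (t + ε), ‖g u (φ t ε u) z‖ :=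
          setIntegral_mono_set hint_gφ.norm (ae_of_all _ fun u => norm_nonneg _)
            (ae_of_all _ (Set.Ioc_subset_Ioc_left hr.1))
      _ ≤ ∫ u in Set.Ioc t (t + ε), (‖f u‖ + μ * ‖φ t ε u - y‖) := by
          refine setIntegral_mono_on hint_gφ.norm (hint_fn.add hint_μφ)
            measurableSet_Ioc fun u hu => ?_
          have hu' : u ∈ Set.Icc t (t + ε) := Set.Ioc_subset_Icc_self hu
          calc ‖g u (φ t ε u) z‖ ≤ ‖g u (φ t ε u) z - f u‖ + ‖f u‖ := tri _ _
            _ ≤ μ * ‖φ t ε u - y‖ + ‖f u‖ := by gcongr; exact hlip_pt u hu'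
            _ = ‖f u‖ + μ * ‖φ t ε u - y‖ := by ring
      _ = A + μ * I := by rw [MeasureTheory.integral_add hint_fn hint_μφ, hμI]
  -- integrate the bound
  have hI_le : I ≤ ε * (A + μ * I) := by
    have h1 : I ≤ ∫ _ in Set.Ioc t (t + ε), (A + μ * I) :=
      setIntegral_mono_on hint_φy
        (integrableOn_const measure_Ioc_lt_top.ne)
        measurableSet_Ioc fun u hu => hpt u (Set.Ioc_subset_Icc_self hu)
    rwa [setIntegral_const, measureReal_def, hvol, smul_eq_mul] at h1
  have hI2 : I ≤ 2 * (ε * A) := by nlinarith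
  have hBε : ∫ u in Set.Ioc t (t + ε), ‖f u - f t‖ = ε * B ε := by
    rw [hBdef]; field_simp
  have hA_le : A ≤ ε * B ε + ε * ‖f t‖ := by
    have h1 : A ≤ ∫ u in Set.Ioc t (t + ε), (‖f u - f t‖ + ‖f t‖) :=
      setIntegral_mono_on hint_fn
        (hint_fcn.add (integrableOn_const measure_Ioc_lt_top.ne))
        measurableSet_Ioc fun u hu => tri _ _
    rwa [MeasureTheory.integral_add hint_fcn
        (integrableOn_const measure_Ioc_lt_top.ne),
      hBε, setIntegral_const, measureReal_def, hvol, smul_eq_mul] at h1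
  -- key equation
  have hkey : φ t ε t - y = ∫ r in Set.Ioc t (t + ε), g r (φ t ε r) z := by
    have h := hφ t ⟨ht0, htT⟩ ε ⟨hε0, hεT⟩ t ⟨le_refl _, htε⟩
    rw [h, intervalIntegral.integral_of_le htε]
    abel
  have hsplit : (∫ r in Set.Ioc t (t + ε), g r (φ t ε r) z)
      = (∫ r in Set.Ioc t (t + ε), (g r (φ t ε r) z - f r))
        + ∫ r in Set.Ioc t (t + ε), f r := by
    rw [MeasureTheory.integral_sub hint_gφ hint_f]
    abel
  have hconst : ε⁻¹ • (∫ r in Set.Ioc t (t + ε), f r) - f t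
      = ε⁻¹ • ∫ r in Set.Ioc t (t + ε), (f r - f t) := by
    rw [MeasureTheory.integral_sub hint_f (hint_c (f t)), setIntegral_const, measureReal_def, hvol,
      smul_sub, smul_smul, inv_mul_cancel₀ (ne_of_gt hε0), one_smul]
  calc ‖ε⁻¹ • (φ t ε t - y) - g t y z‖
      = ‖ε⁻¹ • (∫ r in Set.Ioc t (t + ε), (g r (φ t ε r) z - f r))
          + ε⁻¹ • ∫ r in Set.Ioc t (t + ε), (f r - f t)‖ := by
        rw [hkey, hsplit, smul_add]
        rw [show ∀ a b c : EuclideanSpace ℝ (Fin n), a + b - c = a + (b - c) by intros; abel]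
        rw [hconst]
    _ ≤ ‖ε⁻¹ • (∫ r in Set.Ioc t (t + ε), (g r (φ t ε r) z - f r))‖
          + ‖ε⁻¹ • ∫ r in Set.Ioc t (t + ε), (f r - f t)‖ := norm_add_le _ _
    _ ≤ ε⁻¹ * (μ * I) + ε⁻¹ * (ε * B ε) := by
        gcongr
        · rw [norm_smul, Real.norm_eq_abs, abs_of_pos (by positivity)]
          gcongr
          calc ‖∫ r in Set.Ioc t (t + ε), (g r (φ t ε r) z - f r)‖
              ≤ ∫ r in Set.Ioc t (t + ε), ‖g r (φ t ε r) z - f r‖ :=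
                norm_integral_le_integral_norm _
            _ ≤ ∫ r in Set.Ioc t (t + ε), μ * ‖φ t ε r - y‖ :=
                setIntegral_mono_on hint_gf.norm hint_μφ
                  measurableSet_Ioc fun u hu => hlip_pt u (Set.Ioc_subset_Icc_self hu)
            _ = μ * I := hμI
        · rw [norm_smul, Real.norm_eq_abs, abs_of_pos (by positivity)]
          gcongr
          calc ‖∫ r in Set.Ioc t (t + ε), (f r - f t)‖
              ≤ ∫ r in Set.Ioc t (t + ε), ‖f r - f t‖ := norm_integral_le_integral_norm _
            _ = ε * B ε := hBε
    _ ≤ B ε + 2 * μ * ε * (B ε + ‖f t‖) := by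
        have e1 : ε⁻¹ * (ε * B ε) = B ε := by field_simp
        have e2 : ε⁻¹ * (μ * I) ≤ 2 * μ * A := by
          have h3 : μ * I ≤ μ * (2 * (ε * A)) := by nlinarith
          calc ε⁻¹ * (μ * I) ≤ ε⁻¹ * (μ * (2 * (ε * A))) := by gcongr <;> positivity
            _ = 2 * μ * A := by field_simp
        have e3 : 2 * μ * A ≤ 2 * μ * ε * (B ε + ‖f t‖) := by
          calc 2 * μ * A ≤ 2 * μ * (ε * B ε + ε * ‖f t‖) := by gcongr <;> positivity
            _ = 2 * μ * ε * (B ε + ‖f t‖) := by ring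
        rw [e1]
        linarith
end

section
/- Under the axioms of the previous statement (consistency, constant preservation, translation invariance, independent increments), suppose additionally that $t \mapsto G(t,z) := \mathcal{E}_n[zB_t]$ is absolutely continuous for each $z$, with a.e. derivative $g(t,z)$. Then for each $z \in \mathbf{R}^{n\times d}$ and $0 \le t \le s \le T$: $\mathcal{E}_n\left[-\int_t^s g(r,z)\,dr + z(B_s - B_t)\,\Big|\,\mathcal{F}_t\right] = 0$ almost surely. -/
open MeasureTheory intervalIntegral

/-- identity (4.5): under the axioms of Statement 12, if
`t ↦ G(t,z) := 𝓔ₙ[zBₜ]` is absolutely continuous with a.e. derivative `g(·,z)`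
(encoded by the fundamental-theorem identity `∫_t^s g(r,z) dr = G(s,z) - G(t,z)`),
then `𝓔ₙ[-∫_t^s g(r,z) dr + z(B_s - B_t) | 𝓕ₜ] = 0`. -/
theorem stmt13 (n d : ℕ) (T : ℝ) (hT : 0 < T)
    {Ω : Type*} (F : ℝ → MeasurableSpace Ω)
    (B : ℝ → Ω → Fin d → ℝ) (hB : ∀ t : ℝ, Measurable[F t] (B t))
    (Et : ℝ → (Ω → Fin n → ℝ) → Ω → Fin n → ℝ)
    (E0 : (Ω → Fin n → ℝ) → Fin n → ℝ)
    (hconsist : ∀ (t : ℝ) (ξ : Ω → Fin n → ℝ), E0 (Et t ξ) = E0 ξ)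
    (hconstpres : ∀ (t : ℝ) (η : Ω → Fin n → ℝ), Measurable[F t] η → Et t η = η)
    (htra : ∀ (t : ℝ) (ξ η : Ω → Fin n → ℝ), Measurable[F t] η →
      Et t (fun ω => ξ ω + η ω) = fun ω => Et t ξ ω + η ω)
    (htra0 : ∀ (ξ : Ω → Fin n → ℝ) (c : Fin n → ℝ),
      E0 (fun ω => ξ ω + c) = E0 ξ + c)
    (hind : ∀ (z : Matrix (Fin n) (Fin d) ℝ) (t s : ℝ), 0 ≤ t → t ≤ s → s ≤ T →
      Et t (fun ω => z.mulVec (B s ω - B t ω)) =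
        fun _ => E0 (fun ω => z.mulVec (B s ω - B t ω)))
    (g : ℝ → Matrix (Fin n) (Fin d) ℝ → Fin n → ℝ)
    (hg_int : ∀ z, IntegrableOn (fun r => g r z) (Set.Icc 0 T))
    -- absolute continuity of `G(t,z) = 𝓔ₙ[zBₜ]` with a.e. derivative `g`:
    (hac : ∀ (z : Matrix (Fin n) (Fin d) ℝ) (t s : ℝ), 0 ≤ t → t ≤ s → s ≤ T →
      (∫ r in t..s, g r z) =
        E0 (fun ω => z.mulVec (B s ω)) - E0 (fun ω => z.mulVec (B t ω))) :
    ∀ (z : Matrix (Fin n) (Fin d) ℝ) (t s : ℝ), 0 ≤ t → t ≤ s → s ≤ T →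
      Et t (fun ω => -(∫ r in t..s, g r z) + z.mulVec (B s ω - B t ω)) =
        fun _ => 0 := by
  intro z t s ht hts hsT
  -- zBₜ is 𝓕ₜ-measurable
  have hmt : Measurable[F t] (fun ω => z.mulVec (B t ω)) := by
    letI := F t
    exact measurable_pi_lambda _ fun i => by
      simp only [Matrix.mulVec, dotProduct]
      exact Finset.measurable_sum _ fun j _ =>
        (measurable_const.mul ((measurable_pi_apply j).comp (hB t)))
  -- Et t (zB_s) = E0(z(B_s - B_t)) + zB_t
  have key : E0 (fun ω => z.mulVec (B s ω)) =
      E0 (fun ω => z.mulVec (B t ω)) + E0 (fun ω => z.mulVec (B s ω - B t ω)) := by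
    have h1 : (fun ω => z.mulVec (B s ω)) =
        fun ω => z.mulVec (B s ω - B t ω) + z.mulVec (B t ω) := by
      funext ω
      rw [← Matrix.mulVec_add]
      ring_nf
    calc E0 (fun ω => z.mulVec (B s ω))
        = E0 (Et t (fun ω => z.mulVec (B s ω))) := (hconsist t _).symm
      _ = E0 (fun ω => Et t (fun ω' => z.mulVec (B s ω' - B t ω')) ω
            + z.mulVec (B t ω)) := by rw [h1, htra t _ _ hmt]
      _ = E0 (fun ω => z.mulVec (B t ω)
            + E0 (fun ω' => z.mulVec (B s ω' - B t ω'))) := by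
          have harg : (fun ω => Et t (fun ω' => z.mulVec (B s ω' - B t ω')) ω
                + z.mulVec (B t ω))
              = fun ω => z.mulVec (B t ω)
                + E0 (fun ω' => z.mulVec (B s ω' - B t ω')) := by
            funext ω
            rw [hind z t s ht hts hsT]
            exact add_comm _ _
          rw [harg]
      _ = E0 (fun ω => z.mulVec (B t ω)) + E0 (fun ω => z.mulVec (B s ω - B t ω)) :=
          htra0 _ _
  have hint : (∫ r in t..s, g r z) = E0 (fun ω => z.mulVec (B s ω - B t ω)) := by
    rw [hac z t s ht hts hsT, key]; ring
  have hgoal : (fun ω => -(∫ r in t..s, g r z) + z.mulVec (B s ω - B t ω)) =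
      fun ω => z.mulVec (B s ω - B t ω) + (-(∫ r in t..s, g r z)) := by
    funext ω; exact add_comm _ _
  rw [hgoal, htra t _ _ (by letI := F t; exact measurable_const),
    hind z t s ht hts hsT]
  funext ω
  rw [hint]
  simp
end
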